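/- Let H₁ and H₂ be 2-dimensional complex Hilbert spaces and v ∈ H₁ ⊗ H₂ a unit vector. Then v is entangled (i.e. v is not of the form x ⊗ y) if and only if neither reduced density operator of v has 0 as an eigenvalue, i.e. (P_u ⊗ I)v ≠ 0 for every nonzero u ∈ H₁ and (I ⊗ P_w)v ≠ 0 for every nonzero w ∈ H₂ (where P_u, P_w are the orthogonal projections onto the spans of u and w). Consequently, every entangled unit vector of two 2-dimensional factors is hyperentangled. -/

import Mathlib

open scoped InnerProductSpace

noncomputable section

/-- The (completed) Hilbert tensor product of two complex Hilbert spaces `H₁`, `H₂`,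
presented as a Hilbert space `H` together with a bilinear map `tmul` (elementary tensors)
whose inner products multiply, whose elementary tensors span a dense subspace, and together
with the tensor product `map A B = A ⊗ B` of bounded operators. -/
structure HilbertTensor (H₁ H₂ H : Type*)
    [NormedAddCommGroup H₁] [InnerProductSpace ℂ H₁] [CompleteSpace H₁]
    [NormedAddCommGroup H₂] [InnerProductSpace ℂ H₂] [CompleteSpace H₂]
    [NormedAddCommGroup H] [InnerProductSpace ℂ H] [CompleteSpace H] where
  tmul : H₁ →ₗ[ℂ] H₂ →ₗ[ℂ] H
  inner_tmul : ∀ x₁ y₁ x₂ y₂, ⟪tmul x₁ y₁, tmul x₂ y₂⟫_ℂ = ⟪x₁, x₂⟫_ℂ * ⟪y₁, y₂⟫_ℂ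
  dense_span : Dense (↑(Submodule.span ℂ {z : H | ∃ x y, z = tmul x y}) : Set H)
  map : (H₁ →L[ℂ] H₁) → (H₂ →L[ℂ] H₂) → (H →L[ℂ] H)
  map_tmul : ∀ A B x y, map A B (tmul x y) = tmul (A x) (B y)

variable {H₁ H₂ H : Type*}
  [NormedAddCommGroup H₁] [InnerProductSpace ℂ H₁] [CompleteSpace H₁]
  [NormedAddCommGroup H₂] [InnerProductSpace ℂ H₂] [CompleteSpace H₂]
  [NormedAddCommGroup H] [InnerProductSpace ℂ H] [CompleteSpace H]

/-- `v` is cyclic for the first factor: `{(A ⊗ I) v : A bounded on H₁}` is dense in `H`. -/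
def HilbertTensor.CyclicFst (T : HilbertTensor H₁ H₂ H) (v : H) : Prop :=
  Dense (Set.range fun A : H₁ →L[ℂ] H₁ => T.map A 1 v)

/-- An orthogonal projection on a Hilbert space: a self-adjoint idempotent bounded operator. -/
def IsONProj {E : Type*} [NormedAddCommGroup E] [InnerProductSpace ℂ E] [CompleteSpace E]
    (P : E →L[ℂ] E) : Prop :=
  IsSelfAdjoint P ∧ P ∘L P = P

/-- The algebra of the second factor is maximally correlated with the algebra of the first
factor in the state `v`. -/
def HilbertTensor.MaxCorrSndFst (T : HilbertTensor H₁ H₂ H) (v : H) : Prop :=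
  ∀ P' : H₂ →L[ℂ] H₂, IsONProj P' → P' ≠ 0 → ∀ ε : ℝ, 0 < ε →
    ∃ P : H₁ →L[ℂ] H₁, IsONProj P ∧ P ≠ 0 ∧
      0 < (⟪v, T.map P 1 v⟫_ℂ).re ∧
      (1 - ε) * (⟪v, T.map P 1 v⟫_ℂ).re ≤ (⟪v, T.map P P' v⟫_ℂ).re

/-- The orthogonal projection onto the span of a vector, as an operator `E →L[ℂ] E`. -/
def projSpan {E : Type*} [NormedAddCommGroup E] [InnerProductSpace ℂ E] [CompleteSpace E]
    (w : E) : E →L[ℂ] E :=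
  (ℂ ∙ w).subtypeL ∘L Submodule.orthogonalProjectionOnto (ℂ ∙ w)

/-- The algebra of the first factor is maximally correlated with the algebra of the second
factor in the state `v`. -/
def HilbertTensor.MaxCorrFstSnd (T : HilbertTensor H₁ H₂ H) (v : H) : Prop :=
  ∀ P : H₁ →L[ℂ] H₁, IsONProj P → P ≠ 0 → ∀ ε : ℝ, 0 < ε →
    ∃ P' : H₂ →L[ℂ] H₂, IsONProj P' ∧ P' ≠ 0 ∧
      0 < (⟪v, T.map 1 P' v⟫_ℂ).re ∧
      (1 - ε) * (⟪v, T.map 1 P' v⟫_ℂ).re ≤ (⟪v, T.map P P' v⟫_ℂ).re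

/-- A unit vector of a two-factor tensor product is hyperentangled when the algebra of each
factor is maximally correlated with the algebra of the other factor in it. -/
def HilbertTensor.Hyper₂ (T : HilbertTensor H₁ H₂ H) (v : H) : Prop :=
  T.MaxCorrSndFst v ∧ T.MaxCorrFstSnd v

/-!
Expand `v = ∑ᵢ aᵢ ⊗ fᵢ` along an orthonormal basis `(fᵢ)` of `H₂`. Then
`(P_u ⊗ I) v = ∑ᵢ P_u aᵢ ⊗ fᵢ` vanishes exactly when every `aᵢ` is orthogonal to `u`; since `u^⊥`
is a line `ℂ e` when `dim H₁ = 2`, this forces `v = e ⊗ ∑ᵢ cᵢ fᵢ`. Conversely `x ⊗ y` is killed by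
`P_u ⊗ I` for any `u ⊥ x`. Swapping the factors gives the same for `I ⊗ P_w`.

For hyperentanglement, given a projection `P' ≠ 0` take a unit vector `f₀` in its range, complete it
to an orthonormal basis `(f₀, f₁)` of `H₂` and pick `u ≠ 0` orthogonal to `a₁`. Then
`(P_u ⊗ P') v = (P_u ⊗ I) v = P_u a₀ ⊗ f₀`, which is nonzero by the first part, so the correlation
is exact and no `ε` is needed.
-/

open Module Submodule

section InnerProductSpace

variable {E : Type*} [NormedAddCommGroup E] [InnerProductSpace ℂ E]

theorem exists_norm_eq_one_apply_eq_self {P : E →L[ℂ] E} (hP : P ∘L P = P) (h0 : P ≠ 0) :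
    ∃ w, ‖w‖ = 1 ∧ P w = w := by
  obtain ⟨x, hx⟩ : ∃ x, P x ≠ 0 := by
    by_contra! h
    exact h0 (ContinuousLinearMap.ext h)
  refine ⟨(‖P x‖⁻¹ : ℂ) • P x, norm_smul_inv_norm hx, ?_⟩
  rw [map_smul, ← ContinuousLinearMap.comp_apply, hP]

theorem exists_ne_zero_inner_eq_zero (hE : 1 < finrank ℂ E) (x : E) :
    ∃ u ≠ 0, ⟪u, x⟫_ℂ = 0 := by
  have : FiniteDimensional ℂ E := Module.finite_of_finrank_pos (zero_lt_one.trans hE)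
  have hx : (ℂ ∙ x) ≠ ⊤ := fun h => by
    have := finrank_span_le_card (R := ℂ) ({x} : Set E)
    rw [h, finrank_top] at this
    simp at this
    omega
  obtain ⟨u, hu, hu0⟩ := exists_mem_ne_zero_of_ne_bot (mt orthogonal_eq_bot_iff.1 hx)
  exact ⟨u, hu0, mem_orthogonal_singleton_iff_inner_left.1 hu⟩

theorem exists_forall_inner_eq_zero_eq_smul (hE : finrank ℂ E = 2) {u : E} (hu : u ≠ 0) :
    ∃ e : E, ∀ x, ⟪u, x⟫_ℂ = 0 → ∃ c : ℂ, x = c • e := by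
  have : Fact (finrank ℂ E = 1 + 1) := ⟨hE⟩
  obtain ⟨e, -, he⟩ :=
    finrank_eq_one_iff'.1 (finrank_orthogonal_span_singleton (𝕜 := ℂ) (n := 1) hu)
  refine ⟨e, fun x hx => ?_⟩
  obtain ⟨c, hc⟩ := he ⟨x, mem_orthogonal_singleton_iff_inner_right.2 hx⟩
  exact ⟨c, congr_arg Subtype.val hc.symm⟩

theorem exists_orthonormalBasis_fin_two_apply_zero (hE : finrank ℂ E = 2) {e : E}
    (he : ‖e‖ = 1) : ∃ f : OrthonormalBasis (Fin 2) ℂ E, f 0 = e := by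
  have : FiniteDimensional ℂ E := .of_finrank_eq_succ hE
  have hsingle : Orthonormal ℂ (({0} : Set (Fin 2)).domRestrict fun _ => e) :=
    ⟨fun _ => he, Subsingleton.pairwise⟩
  obtain ⟨f, hf⟩ := hsingle.exists_orthonormalBasis_extension_of_card_eq (by simp [hE])
  exact ⟨f, hf 0 rfl⟩

variable [CompleteSpace E]

theorem projSpan_eq_starProjection (w : E) : projSpan w = (ℂ ∙ w).starProjection := rfl

theorem isONProj_projSpan (w : E) : IsONProj (projSpan w) :=
  ⟨isSelfAdjoint_starProjection _, (ℂ ∙ w).isIdempotentElem_starProjection⟩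

theorem projSpan_apply_eq_zero_iff {w x : E} : projSpan w x = 0 ↔ ⟪w, x⟫_ℂ = 0 :=
  (starProjection_apply_eq_zero_iff _).trans mem_orthogonal_singleton_iff_inner_right

theorem projSpan_ne_zero {w : E} (hw : w ≠ 0) : projSpan w ≠ 0 := fun h => by
  have hww : projSpan w w = w := starProjection_eq_self_iff.2 (mem_span_singleton_self w)
  rw [h, zero_apply] at hww
  exact hw hww.symm

theorem re_inner_projSpan_pos {w x : E} (h : projSpan w x ≠ 0) :
    0 < (⟪x, projSpan w x⟫_ℂ).re := by
  rw [projSpan_eq_starProjection, ← inner_starProjection_left_eq_right, ← RCLike.re_to_complex,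
    re_inner_starProjection_eq_normSq]
  exact pow_pos (norm_pos_iff.2 fun h0 => h (by simp [projSpan_eq_starProjection,
    starProjection_apply, h0])) 2

end InnerProductSpace

namespace HilbertTensor

variable (T : HilbertTensor H₁ H₂ H)

def flip : HilbertTensor H₂ H₁ H where
  tmul := T.tmul.flip
  inner_tmul x₁ y₁ x₂ y₂ := by
    rw [LinearMap.flip_apply, LinearMap.flip_apply, T.inner_tmul, mul_comm]
  dense_span := by
    convert T.dense_span using 6
    exact exists_comm
  map A B := T.map B A
  map_tmul A B x y := T.map_tmul B A y x

theorem exists_eq_tmul_flip_iff {v : H} :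
    (∃ x y, v = T.flip.tmul x y) ↔ ∃ x y, v = T.tmul x y :=
  exists_comm

theorem exists_eq_sum_tmul [FiniteDimensional ℂ H₁] {ι : Type*} [Fintype ι]
    (f : Basis ι ℂ H₂) (v : H) : ∃ a : ι → H₁, v = ∑ i, T.tmul (a i) (f i) := by
  let L : (ι → H₁) →ₗ[ℂ] H := ∑ i, (T.tmul.flip (f i)).comp (LinearMap.proj i)
  have hL : ∀ a, L a = ∑ i, T.tmul (a i) (f i) := fun a => by simp [L]
  have hdense : Dense (LinearMap.range L : Set H) := by
    refine T.dense_span.mono (span_le.2 ?_)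
    rintro _ ⟨x, y, rfl⟩
    refine ⟨fun i => f.repr y i • x, ?_⟩
    rw [hL]
    conv_rhs => rw [← f.sum_repr y]
    simp only [map_sum, map_smul, LinearMap.smul_apply]
  have htop : LinearMap.range L = ⊤ := by
    rw [← (LinearMap.range L).closed_of_finiteDimensional.submodule_topologicalClosure_eq]
    exact dense_iff_topologicalClosure_eq_top.1 hdense
  obtain ⟨a, ha⟩ := LinearMap.range_eq_top.1 htop v
  exact ⟨a, by rw [← ha, hL]⟩

variable {ι : Type*} [Fintype ι] {f : ι → H₂}

theorem inner_tmul_sum_tmul (hf : Orthonormal ℂ f) (x : H₁) (a : ι → H₁) (j : ι) :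
    ⟪T.tmul x (f j), ∑ i, T.tmul (a i) (f i)⟫_ℂ = ⟪x, a j⟫_ℂ := by
  classical
  simp [T.inner_tmul, orthonormal_iff_ite.1 hf]

theorem sum_tmul_eq_zero_iff (hf : Orthonormal ℂ f) {a : ι → H₁} :
    ∑ i, T.tmul (a i) (f i) = 0 ↔ ∀ i, a i = 0 := by
  refine ⟨fun h j => ext_inner_left ℂ fun x => ?_, fun h => by simp [h]⟩
  rw [← T.inner_tmul_sum_tmul hf, h, inner_zero_right, inner_zero_right]

theorem map_sum_tmul (A : H₁ →L[ℂ] H₁) (B : H₂ →L[ℂ] H₂) (a : ι → H₁) :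
    T.map A B (∑ i, T.tmul (a i) (f i)) = ∑ i, T.tmul (A (a i)) (B (f i)) := by
  simp [map_sum, T.map_tmul]

theorem map_projSpan_tmul_eq_zero {u x : H₁} (h : ⟪u, x⟫_ℂ = 0) (y : H₂) :
    T.map (projSpan u) 1 (T.tmul x y) = 0 := by
  rw [T.map_tmul, projSpan_apply_eq_zero_iff.2 h, map_zero, LinearMap.zero_apply]

theorem exists_eq_tmul_of_map_projSpan_eq_zero (h₁ : finrank ℂ H₁ = 2) [FiniteDimensional ℂ H₂]
    {u : H₁} (hu : u ≠ 0) {v : H} (h : T.map (projSpan u) 1 v = 0) :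
    ∃ x y, v = T.tmul x y := by
  have : FiniteDimensional ℂ H₁ := .of_finrank_eq_succ h₁
  let f := stdOrthonormalBasis ℂ H₂
  obtain ⟨a, rfl⟩ := T.exists_eq_sum_tmul f.toBasis v
  simp only [OrthonormalBasis.coe_toBasis, T.map_sum_tmul, one_apply_eq_self,
    T.sum_tmul_eq_zero_iff f.orthonormal, projSpan_apply_eq_zero_iff] at h
  obtain ⟨e, he⟩ := exists_forall_inner_eq_zero_eq_smul h₁ hu
  choose c hc using fun i => he (a i) (h i)
  exact ⟨e, ∑ i, c i • f i, by simp [hc, map_sum]⟩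

theorem not_exists_eq_tmul_iff (h₁ : finrank ℂ H₁ = 2) [FiniteDimensional ℂ H₂] (v : H) :
    (¬ ∃ x y, v = T.tmul x y) ↔ ∀ u : H₁, u ≠ 0 → T.map (projSpan u) 1 v ≠ 0 := by
  refine ⟨fun hv u hu h => hv (T.exists_eq_tmul_of_map_projSpan_eq_zero h₁ hu h), ?_⟩
  rintro h ⟨x, y, rfl⟩
  obtain ⟨u, hu, hux⟩ := exists_ne_zero_inner_eq_zero (by omega) x
  exact h u hu (T.map_projSpan_tmul_eq_zero hux y)

theorem maxCorrSndFst_of_not_exists_eq_tmul (h₁ : finrank ℂ H₁ = 2)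
    (h₂ : finrank ℂ H₂ = 2) {v : H} (hv : ¬ ∃ x y, v = T.tmul x y) : T.MaxCorrSndFst v := by
  have : FiniteDimensional ℂ H₁ := .of_finrank_eq_succ h₁
  have : FiniteDimensional ℂ H₂ := .of_finrank_eq_succ h₂
  intro P' hP' hP'0 ε hε
  obtain ⟨w, hw, hP'w⟩ := exists_norm_eq_one_apply_eq_self hP'.2 hP'0
  obtain ⟨f, hf0⟩ := exists_orthonormalBasis_fin_two_apply_zero h₂ hw
  obtain ⟨a, hva⟩ := T.exists_eq_sum_tmul f.toBasis v
  rw [OrthonormalBasis.coe_toBasis] at hva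
  obtain ⟨u, hu, hua⟩ := exists_ne_zero_inner_eq_zero (by omega) (a 1)
  have hP1 : T.map (projSpan u) 1 v = T.tmul (projSpan u (a 0)) (f 0) := by
    rw [hva, T.map_sum_tmul]
    simp [projSpan_apply_eq_zero_iff.2 hua]
  have hPP' : T.map (projSpan u) P' v = T.map (projSpan u) 1 v := by
    rw [hP1, hva, T.map_sum_tmul]
    simp [projSpan_apply_eq_zero_iff.2 hua, hf0, hP'w]
  have hpos : 0 < (⟪v, T.map (projSpan u) 1 v⟫_ℂ).re := by
    have hne := (T.not_exists_eq_tmul_iff h₁ v).1 hv u hu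
    rw [hP1] at hne ⊢
    rw [← inner_conj_symm, hva, T.inner_tmul_sum_tmul f.orthonormal, inner_conj_symm]
    exact re_inner_projSpan_pos fun h => hne (by simp [h])
  refine ⟨projSpan u, isONProj_projSpan u, projSpan_ne_zero hu, hpos, ?_⟩
  rw [hPP', sub_mul, one_mul]
  linarith [mul_pos hε hpos]

end HilbertTensor

theorem entangled_iff_no_zero_eigenvalue_and_hyper_of_dim_two_general
    (h₁ : Module.finrank ℂ H₁ = 2) (h₂ : Module.finrank ℂ H₂ = 2)
    (T : HilbertTensor H₁ H₂ H) (v : H) :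
    ((¬ ∃ (x : H₁) (y : H₂), v = T.tmul x y) ↔
      ((∀ u : H₁, u ≠ 0 → T.map (projSpan u) 1 v ≠ 0) ∧
       (∀ w : H₂, w ≠ 0 → T.map 1 (projSpan w) v ≠ 0))) ∧
    ((¬ ∃ (x : H₁) (y : H₂), v = T.tmul x y) → T.Hyper₂ v) := by
  have : FiniteDimensional ℂ H₁ := .of_finrank_eq_succ h₁
  have : FiniteDimensional ℂ H₂ := .of_finrank_eq_succ h₂
  have hflip := T.exists_eq_tmul_flip_iff (v := v)
  refine ⟨⟨fun hv => ⟨(T.not_exists_eq_tmul_iff h₁ v).1 hv, ?_⟩,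
    fun h => (T.not_exists_eq_tmul_iff h₁ v).2 h.1⟩, fun hv => ⟨?_, ?_⟩⟩
  · exact (T.flip.not_exists_eq_tmul_iff h₂ v).1 (hflip.not.2 hv)
  · exact T.maxCorrSndFst_of_not_exists_eq_tmul h₁ h₂ hv
  · exact T.flip.maxCorrSndFst_of_not_exists_eq_tmul h₂ h₁ (hflip.not.2 hv)

/-- for `H₁`, `H₂` two-dimensional and `v ∈ H₁ ⊗ H₂` a unit vector, `v` is
entangled (not a product vector) iff neither reduced density operator of `v` has `0` as an
eigenvalue, i.e. `(P_u ⊗ I) v ≠ 0` for all nonzero `u ∈ H₁` and `(I ⊗ P_w) v ≠ 0` for all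
nonzero `w ∈ H₂`; consequently every entangled unit vector of two two-dimensional factors is
hyperentangled. -/
theorem entangled_iff_no_zero_eigenvalue_and_hyper_of_dim_two
    (h₁ : Module.finrank ℂ H₁ = 2) (h₂ : Module.finrank ℂ H₂ = 2)
    (T : HilbertTensor H₁ H₂ H) (v : H) (hv : ‖v‖ = 1) :
    ((¬ ∃ (x : H₁) (y : H₂), v = T.tmul x y) ↔
      ((∀ u : H₁, u ≠ 0 → T.map (projSpan u) 1 v ≠ 0) ∧
       (∀ w : H₂, w ≠ 0 → T.map 1 (projSpan w) v ≠ 0))) ∧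
    ((¬ ∃ (x : H₁) (y : H₂), v = T.tmul x y) → T.Hyper₂ v) :=
  entangled_iff_no_zero_eigenvalue_and_hyper_of_dim_two_general h₁ h₂ T v

end
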